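/- Let X be a real normed linear space, E ⊆ X bounded uniquely remotal with Chebyshev center 0, and F the farthest point map. Suppose {x_n} ⊆ [0, F(0)] with x_n = μ_n F(0), μ_n > 0. If ψ_n ∈ X* are norm-one functionals with ψ_n(F(x_n) − x_n) = ‖F(x_n) − x_n‖, then ψ_n(F(0)) ≤ 0 for all n. -/

import Mathlib

/-- Farthest distance from `x` to a set `E`. -/
noncomputable def fdist {X : Type*} [NormedAddCommGroup X] (x : X) (E : Set X) : ℝ :=
  sSup ((fun e => ‖x - e‖) '' E)

section FarthestDistance

variable {X : Type*} [NormedAddCommGroup X] {E : Set X}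

theorem fdist_nonneg (x : X) (E : Set X) : 0 ≤ fdist x E :=
  Real.sSup_nonneg <| by
    rintro _ ⟨e, -, rfl⟩
    exact norm_nonneg _

theorem Bornology.IsBounded.bddAbove_norm_sub (hb : Bornology.IsBounded E) (x : X) :
    BddAbove ((fun e => ‖x - e‖) '' E) := by
  obtain ⟨C, hC⟩ := hb.exists_norm_le
  refine ⟨‖x‖ + C, ?_⟩
  rintro _ ⟨e, he, rfl⟩
  exact (norm_sub_le x e).trans (add_le_add_right (hC e he) _)

theorem norm_sub_le_fdist (hb : Bornology.IsBounded E) (x : X) {e : X} (he : e ∈ E) :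
    ‖x - e‖ ≤ fdist x E :=
  le_csSup (hb.bddAbove_norm_sub x) ⟨e, he, rfl⟩

theorem fdist_le_of_eq_iInf {c : X} (hc : fdist c E = ⨅ x : X, fdist x E) (y : X) :
    fdist c E ≤ fdist y E :=
  hc ▸ ciInf_le ⟨0, by rintro _ ⟨x, rfl⟩; exact fdist_nonneg x E⟩ y

variable [NormedSpace ℝ X]

/-- If `ψ` norms the vector from `y` to a farthest point `e` of `E`, then
`ψ y = ψ e - ‖e - y‖ ≤ ‖e‖ - ‖e - y‖ ≤ fdist 0 E - fdist y E`. -/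
theorem ContinuousLinearMap.apply_le_fdist_zero_sub_fdist (hb : Bornology.IsBounded E)
    {ψ : X →L[ℝ] ℝ} (hψ1 : ‖ψ‖ ≤ 1) {y e : X} (he : e ∈ E) (hfar : ‖y - e‖ = fdist y E)
    (hψ : ψ (e - y) = ‖e - y‖) :
    ψ y ≤ fdist 0 E - fdist y E := by
  have hψe : ψ e ≤ ‖e‖ :=
    calc ψ e ≤ ‖ψ‖ * ‖e‖ := (le_abs_self _).trans (ψ.le_opNorm e)
      _ ≤ ‖e‖ := mul_le_of_le_one_left (norm_nonneg e) hψ1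
  have he0 : ‖e‖ ≤ fdist 0 E := by simpa using norm_sub_le_fdist hb 0 he
  rw [map_sub, norm_sub_rev, hfar] at hψ
  linarith

end FarthestDistance

theorem functional_nonpos_general
    {X : Type*} [NormedAddCommGroup X] [NormedSpace ℝ X]
    (E : Set X) (hb : Bornology.IsBounded E)
    (F : X → X)
    (hF : ∀ x : X, F x ∈ E ∧ ‖x - F x‖ = fdist x E ∧
      ∀ e ∈ E, ‖x - e‖ = fdist x E → e = F x)
    (hc : fdist (0 : X) E = ⨅ x : X, fdist x E)
    (x : ℕ → X) (μ : ℕ → ℝ) (hμ : ∀ n, 0 < μ n)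
    (hx : ∀ n, x n = μ n • F 0)
    (ψ : ℕ → X →L[ℝ] ℝ) (hψn : ∀ n, ‖ψ n‖ = 1)
    (hψ : ∀ n, ψ n (F (x n) - x n) = ‖F (x n) - x n‖) :
    ∀ n, ψ n (F 0) ≤ 0 := by
  intro n
  obtain ⟨hmem, hfar, -⟩ := hF (x n)
  have hxn : ψ n (x n) ≤ 0 :=
    ((ψ n).apply_le_fdist_zero_sub_fdist hb (hψn n).le hmem hfar (hψ n)).trans
      (sub_nonpos.2 (fdist_le_of_eq_iInf hc (x n)))
  rw [hx n, map_smul, smul_eq_mul] at hxn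
  exact nonpos_of_mul_nonpos_right hxn (hμ n)

theorem functional_nonpos
    {X : Type*} [NormedAddCommGroup X] [NormedSpace ℝ X]
    (E : Set X) (hE : E.Nonempty) (hb : Bornology.IsBounded E)
    (F : X → X)
    (hF : ∀ x : X, F x ∈ E ∧ ‖x - F x‖ = fdist x E ∧
      ∀ e ∈ E, ‖x - e‖ = fdist x E → e = F x)
    (hc : fdist (0 : X) E = ⨅ x : X, fdist x E)
    (x : ℕ → X) (μ : ℕ → ℝ) (hμ : ∀ n, 0 < μ n)
    (hx : ∀ n, x n = μ n • F 0)
    (ψ : ℕ → X →L[ℝ] ℝ) (hψn : ∀ n, ‖ψ n‖ = 1)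
    (hψ : ∀ n, ψ n (F (x n) - x n) = ‖F (x n) - x n‖) :
    ∀ n, ψ n (F 0) ≤ 0 :=
  functional_nonpos_general E hb F hF hc x μ hμ hx ψ hψn hψ
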